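/- arXiv:2404.13389 — 4 statements merged into one kernel-verified Lean document; each statement's English description precedes it below -/
import Mathlib

section
/- Let $H$ be a graph with independence number $\alpha_H$, and set $\gamma_H = |V(H)| - \alpha_H - 1$. Then the book $B_{\gamma_H, n - \gamma_H}$ contains no $H$ minor, for every $n \geq |V(H)|$. -/
/-! Branch sets of a minor model are disjoint, so at most `s` of them meet the clique of
`B_{s,t}`; the remaining ones lie in the independent side, and since no edge of the book joins
two of them, the corresponding vertices of `H` are independent. Hence a book `B_{s,t}` with an
`H` minor has `|V(H)| ≤ α_H + s`, which fails for `s = γ_H`. -/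

/-- `G` contains `H` as a minor. -/
def SimpleGraph.HasMinor {V : Type*} {W : Type*} (G : SimpleGraph V) (H : SimpleGraph W) :
    Prop :=
  ∃ f : W → Set V,
    (∀ w, (f w).Nonempty) ∧
    (∀ w, (G.induce (f w)).Connected) ∧
    (Pairwise fun w₁ w₂ => Disjoint (f w₁) (f w₂)) ∧
    (∀ ⦃w₁ w₂⦄, H.Adj w₁ w₂ → ∃ v₁ ∈ f w₁, ∃ v₂ ∈ f w₂, G.Adj v₁ v₂)

/-- The book graph `B_{s,t}`: the join of a clique on `s` vertices with an independent set
of `t` vertices. -/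
def book (s t : ℕ) : SimpleGraph (Fin s ⊕ Fin t) where
  Adj a b := a ≠ b ∧ (a.isLeft ∨ b.isLeft)
  symm := ⟨by rintro a b ⟨h1, h2⟩; exact ⟨h1.symm, h2.symm⟩⟩
  loopless := ⟨by rintro a ⟨h, _⟩; exact h rfl⟩

/-- The independence number of a finite graph. -/
noncomputable def SimpleGraph.indepNumFin {W : Type*} [Fintype W] (H : SimpleGraph W) : ℕ :=
  sSup {n : ℕ | ∃ s : Finset W, s.card = n ∧ ∀ a ∈ s, ∀ b ∈ s, ¬ H.Adj a b}

open Finset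

namespace SimpleGraph

variable {V W : Type*}

theorem indepNumFin_eq_indepNum [Fintype W] (H : SimpleGraph W) : H.indepNumFin = H.indepNum := by
  unfold indepNumFin indepNum
  congr 1; ext n
  refine exists_congr fun s => ?_
  rw [isNIndepSet_iff, isIndepSet_iff]
  exact ⟨fun ⟨hc, h⟩ => ⟨fun a ha b hb _ => h a ha b hb, hc⟩,
    fun ⟨h, hc⟩ => ⟨hc, fun a ha b hb hab => h ha hb hab.ne hab⟩⟩

theorem isIndepSet_setOf_subset {G : SimpleGraph V} {H : SimpleGraph W} {f : W → Set V}
    (hf : ∀ ⦃w₁ w₂⦄, H.Adj w₁ w₂ → ∃ v₁ ∈ f w₁, ∃ v₂ ∈ f w₂, G.Adj v₁ v₂) {U : Set V}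
    (hU : G.IsIndepSet U) : H.IsIndepSet {w | f w ⊆ U} := by
  intro w₁ h₁ w₂ h₂ _ hadj
  obtain ⟨v₁, hv₁, v₂, hv₂, hv⟩ := hf hadj
  exact hU (h₁ hv₁) (h₂ hv₂) hv.ne hv

theorem card_le_card_of_forall_exists_mem {f : W → Set V}
    (hf : Pairwise fun w₁ w₂ => Disjoint (f w₁) (f w₂)) {S : Finset W} {T : Finset V}
    (hS : ∀ w ∈ S, ∃ v ∈ T, v ∈ f w) : #S ≤ #T :=
  card_le_card_of_forall_subsingleton (fun w v => v ∈ f w) hS fun _ _ _ h₁ _ h₂ =>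
    by_contra fun hne => Set.disjoint_left.mp (hf hne) h₁.2 h₂.2

theorem HasMinor.card_le_indepNum_add_card [Fintype W] {G : SimpleGraph V} {H : SimpleGraph W}
    (h : G.HasMinor H) (T : Finset V) (hT : G.IsIndepSet (↑T)ᶜ) :
    Fintype.card W ≤ H.indepNum + #T := by
  classical
  obtain ⟨f, -, -, hdisj, hadj⟩ := h
  set S : Finset W := {w | f w ⊆ (↑T)ᶜ}
  have hS : #S ≤ H.indepNum :=
    IsIndepSet.card_le_indepNum (by simpa [S] using isIndepSet_setOf_subset hadj hT)
  have hSc : #Sᶜ ≤ #T := card_le_card_of_forall_exists_mem hdisj fun w hw => by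
    simpa [S, Set.subset_def, and_comm] using hw
  calc Fintype.card W = #S + #Sᶜ := (card_add_card_compl S).symm
    _ ≤ H.indepNum + #T := add_le_add hS hSc

end SimpleGraph

open SimpleGraph

theorem book_isIndepSet_range_inr (s t : ℕ) : (book s t).IsIndepSet (Set.range Sum.inr) := by
  rintro _ ⟨a, rfl⟩ _ ⟨b, rfl⟩ - ⟨-, h⟩
  simp at h

theorem card_le_indepNum_add_of_book_hasMinor {W : Type*} [Fintype W] {H : SimpleGraph W}
    {s t : ℕ} (h : (book s t).HasMinor H) : Fintype.card W ≤ H.indepNum + s := by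
  have hT : (book s t).IsIndepSet (↑(univ.map .inl : Finset (Fin s ⊕ Fin t)))ᶜ := by
    simpa [Set.compl_range_inl] using book_isIndepSet_range_inr s t
  simpa using h.card_le_indepNum_add_card _ hT

theorem book_minorFree_general {W : Type*} [Fintype W] (H : SimpleGraph W) (γ n : ℕ)
    (hγ : γ + H.indepNumFin + 1 = Fintype.card W) :
    ¬ (book γ (n - γ)).HasMinor H := fun h => by
  have hcard := card_le_indepNum_add_of_book_hasMinor h
  rw [← H.indepNumFin_eq_indepNum] at hcard
  omega

/-- With `γ_H = |V(H)| - α_H - 1`, the book `B_{γ_H, n - γ_H}` contains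
no `H` minor, for every `n ≥ |V(H)|`. -/
theorem book_minorFree {W : Type*} [Fintype W] (H : SimpleGraph W) (γ n : ℕ)
    (hγ : γ + H.indepNumFin + 1 = Fintype.card W) (hn : Fintype.card W ≤ n) :
    ¬ (book γ (n - γ)).HasMinor H :=
  book_minorFree_general H γ n hγ
end

section
/- Let $G$ be a graph that is the join of a clique $L$ of size $\gamma \geq 1$ with an $(n-\gamma)$-vertex graph of maximum degree at most $\alpha - 1$. Then the spectral radius $\rho = \rho(G)$ satisfies $(\rho - \gamma + 1)(\rho - \alpha) \leq \gamma(n-\gamma)$, hence $\rho \leq \sqrt{\gamma n} + \frac{\alpha + \gamma - 1}{2} + O(1/\sqrt{n})$. -/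
/-!
The clique `L` gives `γ - 1 ≤ ρ`, via the Rayleigh quotient of its indicator vector. For an
eigenvector `x` of `ρ`, let `a` and `b` be the largest entries of `|x|` on `L` and off `L`. The
eigenvalue equation at vertices attaining them gives `ρ a ≤ (γ - 1) a + (n - γ) b` and
`ρ b ≤ γ a + (α - 1) b`: `(a, b)` is a nonnegative sub-eigenvector of the quotient matrix
`[[γ - 1, n - γ], [γ, α - 1]]`, so `ρ` is at most its largest root.
-/

/-- The spectral radius of a finite graph: the largest eigenvalue of its adjacency
matrix (as the supremum of the set of real eigenvalues). -/
noncomputable def SimpleGraph.specRad {V : Type*} [Fintype V] [DecidableEq V]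
    (G : SimpleGraph V) : ℝ :=
  letI : DecidableRel G.Adj := Classical.decRel _
  sSup {μ : ℝ | ∃ x : V → ℝ, x ≠ 0 ∧ (G.adjMatrix ℝ).mulVec x = μ • x}

open Finset Matrix
open scoped MatrixOrder

theorem Matrix.setOf_exists_mulVec_eq_smul_eq_spectrum {K n : Type*} [Field K] [Fintype n]
    [DecidableEq n] (A : Matrix n n K) :
    {μ : K | ∃ x : n → K, x ≠ 0 ∧ A *ᵥ x = μ • x} = spectrum K A := by
  ext μ
  rw [← spectrum_toLin', ← Module.End.hasEigenvalue_iff_mem_spectrum,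
    Module.End.hasEigenvalue_iff, Submodule.ne_bot_iff]
  simp [and_comm]

theorem Matrix.IsHermitian.dotProduct_mulVec_le {n : Type*} [Fintype n] [DecidableEq n]
    {A : Matrix n n ℝ} (hA : A.IsHermitian) {r : ℝ} (hr : ∀ μ ∈ spectrum ℝ A, μ ≤ r)
    (x : n → ℝ) : x ⬝ᵥ A *ᵥ x ≤ r * (x ⬝ᵥ x) := by
  have h := (le_iff.mp (le_algebraMap_of_spectrum_le hr hA)).dotProduct_mulVec_nonneg x
  simpa [sub_mulVec, dotProduct_sub, Algebra.algebraMap_eq_smul_one, smul_mulVec] using h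

theorem sub_mul_sub_le_mul_of_subeigenvector {ρ a b c d g m : ℝ} (hb : 0 ≤ b)
    (hab : 0 < a + b) (hg : 0 ≤ g) (hm : 0 ≤ m) (hc : c ≤ ρ)
    (h₁ : ρ * a ≤ c * a + m * b) (h₂ : ρ * b ≤ g * a + d * b) :
    (ρ - c) * (ρ - d) ≤ g * m := by
  rcases le_or_gt ρ d with hd | hd
  · nlinarith
  rcases hb.eq_or_lt with rfl | hb
  · have : ρ - c = 0 := by nlinarith
    rw [this, zero_mul]
    positivity
  have ha : 0 < a := by nlinarith
  refine le_of_mul_le_mul_right ?_ (mul_pos ha hb)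
  calc (ρ - c) * (ρ - d) * (a * b) = ((ρ - c) * a) * ((ρ - d) * b) := by ring
    _ ≤ (m * b) * (g * a) :=
      mul_le_mul (by linarith) (by linarith) (by positivity) (by positivity)
    _ = g * m * (a * b) := by ring

theorem Finset.exists_nonneg_bound_eq_zero_or_attained {ι : Type*} (s : Finset ι)
    (f : ι → ℝ) : ∃ a, 0 ≤ a ∧ (∀ i ∈ s, f i ≤ a) ∧ (a = 0 ∨ ∃ i ∈ s, f i = a) := by
  classical
  set t := insert 0 (s.image f)
  refine ⟨t.max' (insert_nonempty _ _), le_max' _ _ (mem_insert_self _ _),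
    fun i hi => le_max' _ _ (mem_insert_of_mem (mem_image_of_mem f hi)), ?_⟩
  simpa [t, eq_comm] using max'_mem t (insert_nonempty _ _)

namespace SimpleGraph

variable {V : Type*} [Fintype V] (G : SimpleGraph V) [DecidableRel G.Adj]

theorem abs_mul_abs_le_sum_neighborFinset {ρ : ℝ} {x : V → ℝ}
    (hx : G.adjMatrix ℝ *ᵥ x = ρ • x) (u : V) :
    |ρ| * |x u| ≤ ∑ w ∈ G.neighborFinset u, |x w| := by
  rw [← abs_mul, ← smul_eq_mul, ← Pi.smul_apply, ← hx, adjMatrix_mulVec_apply]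
  exact abs_sum_le_sum_abs _ _

variable [DecidableEq V]

theorem sum_neighborFinset_le {φ : V → ℝ} {s : Finset V} {a b : ℝ} (ha : ∀ v ∈ s, φ v ≤ a)
    (hb : ∀ v ∉ s, φ v ≤ b) (u : V) :
    ∑ w ∈ G.neighborFinset u, φ w ≤
      #{w ∈ G.neighborFinset u | w ∈ s} * a + #{w ∈ G.neighborFinset u | w ∉ s} * b := by
  rw [← sum_filter_add_sum_filter_not _ (· ∈ s)]
  gcongr
  · simpa using sum_le_card_nsmul _ _ a fun v hv => ha v (mem_filter.1 hv).2
  · simpa using sum_le_card_nsmul _ _ b fun v hv => hb v (mem_filter.1 hv).2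

theorem card_filter_neighborFinset_mem_add_one_le {s : Finset V} {u : V} (hu : u ∈ s) :
    #{w ∈ G.neighborFinset u | w ∈ s} + 1 ≤ #s := by
  refine card_lt_card <| (ssubset_iff_of_subset fun w hw => (mem_filter.1 hw).2).2 ⟨u, hu, ?_⟩
  simp

theorem card_filter_neighborFinset_not_mem_add_card_le (s : Finset V) (u : V) :
    #{w ∈ G.neighborFinset u | w ∉ s} + #s ≤ Fintype.card V := by
  rw [← card_compl_add_card s]
  gcongr
  exact fun w hw => mem_compl.2 (mem_filter.1 hw).2

theorem specRad_eq_sSup_spectrum : G.specRad = sSup (spectrum ℝ (G.adjMatrix ℝ)) := by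
  rw [specRad, ← setOf_exists_mulVec_eq_smul_eq_spectrum]
  congr!

theorem le_specRad_of_mem_spectrum {μ : ℝ} (hμ : μ ∈ spectrum ℝ (G.adjMatrix ℝ)) :
    μ ≤ G.specRad :=
  G.specRad_eq_sSup_spectrum ▸ le_csSup finite_real_spectrum.bddAbove hμ

theorem exists_adjMatrix_mulVec_eq_specRad_smul [Nonempty V] :
    ∃ x : V → ℝ, x ≠ 0 ∧ G.adjMatrix ℝ *ᵥ x = G.specRad • x := by
  have hne : (spectrum ℝ (G.adjMatrix ℝ)).Nonempty := by
    rw [(G.isHermitian_adjMatrix ℝ).spectrum_real_eq_range_eigenvalues]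
    exact Set.range_nonempty _
  have h := G.specRad_eq_sSup_spectrum ▸ hne.csSup_mem finite_real_spectrum
  rwa [← setOf_exists_mulVec_eq_smul_eq_spectrum] at h

theorem dotProduct_adjMatrix_mulVec_le_specRad (x : V → ℝ) :
    x ⬝ᵥ G.adjMatrix ℝ *ᵥ x ≤ G.specRad * (x ⬝ᵥ x) :=
  (G.isHermitian_adjMatrix ℝ).dotProduct_mulVec_le (fun _ => G.le_specRad_of_mem_spectrum) x

theorem card_sub_one_le_specRad_of_isClique {s : Finset V} (hs : G.IsClique (s : Set V))
    (hne : s.Nonempty) : (#s : ℝ) - 1 ≤ G.specRad := by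
  set x : V → ℝ := fun v => if v ∈ s then 1 else 0
  have hAx : ∀ u ∈ s, (G.adjMatrix ℝ *ᵥ x) u = #s - 1 := by
    intro u hu
    have : {w ∈ G.neighborFinset u | w ∈ s} = s.erase u := by
      ext w
      simp only [mem_filter, mem_neighborFinset, mem_erase]
      exact ⟨fun h => ⟨(G.ne_of_adj h.1).symm, h.2⟩, fun h => ⟨hs hu h.2 h.1.symm, h.2⟩⟩
    rw [adjMatrix_mulVec_apply, ← sum_filter, sum_const, this, card_erase_of_mem hu]
    simp [Nat.cast_sub (card_pos.2 hne)]
  have hxAx : x ⬝ᵥ G.adjMatrix ℝ *ᵥ x = #s * (#s - 1) := by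
    simp only [dotProduct, x, ite_mul, one_mul, zero_mul]
    rw [sum_ite_mem, univ_inter, sum_congr rfl hAx, sum_const, nsmul_eq_mul]
  have hxx : x ⬝ᵥ x = #s := by simp [dotProduct, x]
  have hpos : (0 : ℝ) < #s := by exact_mod_cast card_pos.2 hne
  have := G.dotProduct_adjMatrix_mulVec_le_specRad x
  rw [hxAx, hxx] at this
  nlinarith

theorem sub_mul_sub_le_of_adjMatrix_mulVec_eq_smul {ρ : ℝ} {x : V → ℝ} (hx0 : x ≠ 0)
    (hx : G.adjMatrix ℝ *ᵥ x = ρ • x) (hρ : 0 ≤ ρ) (s : Finset V) {c d g m : ℝ}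
    (hc : c ≤ ρ) (hg : 0 ≤ g) (hm : 0 ≤ m)
    (hsc : ∀ u ∈ s, #{w ∈ G.neighborFinset u | w ∈ s} ≤ c)
    (hsm : ∀ u ∈ s, #{w ∈ G.neighborFinset u | w ∉ s} ≤ m)
    (hsg : ∀ u ∉ s, #{w ∈ G.neighborFinset u | w ∈ s} ≤ g)
    (hsd : ∀ u ∉ s, #{w ∈ G.neighborFinset u | w ∉ s} ≤ d) :
    (ρ - c) * (ρ - d) ≤ g * m := by
  obtain ⟨a, ha0, hφa, ha⟩ := s.exists_nonneg_bound_eq_zero_or_attained (|x ·|)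
  obtain ⟨b, hb0, hφb, hb⟩ := sᶜ.exists_nonneg_bound_eq_zero_or_attained (|x ·|)
  replace hφb : ∀ v ∉ s, |x v| ≤ b := fun v hv => hφb v (mem_compl.2 hv)
  have hab : 0 < a + b := by
    obtain ⟨v, hv⟩ := Function.ne_iff.mp hx0
    by_cases hvs : v ∈ s
    · linarith [hφa v hvs, abs_pos.2 hv]
    · linarith [hφb v hvs, abs_pos.2 hv]
  have hbound : ∀ u {p q : ℝ}, #{w ∈ G.neighborFinset u | w ∈ s} ≤ p →
      #{w ∈ G.neighborFinset u | w ∉ s} ≤ q → ρ * |x u| ≤ p * a + q * b := by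
    intro u p q hp hq
    calc ρ * |x u| = |ρ| * |x u| := by rw [abs_of_nonneg hρ]
      _ ≤ ∑ w ∈ G.neighborFinset u, |x w| := G.abs_mul_abs_le_sum_neighborFinset hx u
      _ ≤ _ := G.sum_neighborFinset_le hφa hφb u
      _ ≤ p * a + q * b := by gcongr
  have h₁ : ρ * a ≤ c * a + m * b := by
    rcases ha with rfl | ⟨u, hu, rfl⟩
    · simpa using mul_nonneg hm hb0
    · exact hbound u (hsc u hu) (hsm u hu)
  have h₂ : ρ * b ≤ g * a + d * b := by
    rcases hb with rfl | ⟨u, hu, rfl⟩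
    · simpa using mul_nonneg hg ha0
    · exact hbound u (hsg u (mem_compl.1 hu)) (hsd u (mem_compl.1 hu))
  exact sub_mul_sub_le_mul_of_subeigenvector hb0 hab hg hm hc h₁ h₂

end SimpleGraph

theorem specRad_join_bound_general {V : Type*} [Fintype V] [DecidableEq V]
    (G : SimpleGraph V) [DecidableRel G.Adj] (L : Finset V) (γ α : ℕ)
    (hγ : 1 ≤ γ) (hL : L.card = γ)
    (hdom : ∀ u ∈ L, ∀ v : V, v ≠ u → G.Adj u v)
    (hdeg : ∀ v ∉ L, ((G.neighborFinset v).filter fun w => w ∉ L).card ≤ α - 1) :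
    (G.specRad - (γ : ℝ) + 1) * (G.specRad - (α : ℝ))
      ≤ (γ : ℝ) * ((Fintype.card V : ℝ) - (γ : ℝ)) := by
  subst hL
  have hLne : L.Nonempty := card_pos.mp hγ
  have : Nonempty V := hLne.to_type
  have hρ : (#L : ℝ) - 1 ≤ G.specRad :=
    G.card_sub_one_le_specRad_of_isClique (fun u hu v _ huv => hdom u hu v huv.symm) hLne
  have hγ' : (1 : ℝ) ≤ #L := by exact_mod_cast hγ
  obtain ⟨x, hx0, hx⟩ := G.exists_adjMatrix_mulVec_eq_specRad_smul
  have key := G.sub_mul_sub_le_of_adjMatrix_mulVec_eq_smul hx0 hx (by linarith) L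
    (c := #L - 1) (m := Fintype.card V - #L) (g := #L) (d := (α - 1 : ℕ)) hρ (by positivity)
    (sub_nonneg.2 (by exact_mod_cast card_le_univ L))
    (fun u hu => le_sub_iff_add_le.2
      (by exact_mod_cast G.card_filter_neighborFinset_mem_add_one_le hu))
    (fun u _ => le_sub_iff_add_le.2
      (by exact_mod_cast G.card_filter_neighborFinset_not_mem_add_card_le L u))
    (fun u _ => by exact_mod_cast card_le_card fun w hw => (mem_filter.1 hw).2)
    (fun u hu => by exact_mod_cast hdeg u hu)
  have hd : ((α - 1 : ℕ) : ℝ) ≤ α := by exact_mod_cast Nat.sub_le α 1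
  nlinarith

/-- If `G` is the join of a clique `L` of size `γ ≥ 1` with a graph on
the remaining `n - γ` vertices of maximum degree at most `α - 1`, then
`(ρ - γ + 1)(ρ - α) ≤ γ(n - γ)` for `ρ = ρ(G)`. -/
theorem specRad_join_bound {V : Type*} [Fintype V] [DecidableEq V]
    (G : SimpleGraph V) [DecidableRel G.Adj] (L : Finset V) (γ α : ℕ)
    (hγ : 1 ≤ γ) (hα : 1 ≤ α) (hL : L.card = γ)
    (hdom : ∀ u ∈ L, ∀ v : V, v ≠ u → G.Adj u v)
    (hdeg : ∀ v ∉ L, ((G.neighborFinset v).filter fun w => w ∉ L).card ≤ α - 1) :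
    (G.specRad - (γ : ℝ) + 1) * (G.specRad - (α : ℝ))
      ≤ (γ : ℝ) * ((Fintype.card V : ℝ) - (γ : ℝ)) :=
  specRad_join_bound_general G L γ α hγ hL hdom hdeg
end

section
/- Let $s_1 \geq 2$ and let $G$ be a connected $(s_1-1)$-regular graph with no $K_{1,s_1}$ minor, where $s_1 \neq 3$. Then either $G \cong K_{s_1}$, or $s_1$ is odd and $G$ is the complement of a perfect matching on $s_1 + 1$ vertices. -/
/-- The complement of a perfect matching on `2m` vertices: vertices `2i` and `2i+1` are
matched, and two vertices are adjacent iff they belong to different matched pairs. -/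
def cpm (m : ℕ) : SimpleGraph (Fin (2 * m)) where
  Adj a b := (a : ℕ) / 2 ≠ (b : ℕ) / 2
  symm := ⟨fun _ _ h => h.symm⟩
  loopless := ⟨fun _ h => h rfl⟩

/-!
Contracting a connected vertex set `A` to a single vertex shows that, without a `K_{1,s}` minor,
every connected set has at most `d = s - 1` neighbours outside it. Fix a vertex `u` and let `M`
be the set of vertices outside its closed neighbourhood. For a path `u c x y` leaving the ball of
radius two around `u` this bound gives `2(d - 1) ≤ d`, so for `d ≥ 3` all of `M` lies at
distance two from `u`. Applied to a path `u c w` it shows that each `w ∈ M` has at least `d - 1`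
neighbours in `N(u)`, and applied to an edge `u x` that each `x ∈ N(u)` has at most one neighbour
in `M`. Double counting the edges between `M` and `N(u)` gives `|M| (d - 1) ≤ d`, hence
`|M| ≤ 1`. So the graph has `s` vertices and is complete, or `s + 1` vertices and its complement
is `1`-regular, i.e. a perfect matching. For `s = 2` the graph is a single edge.
-/

open Finset

theorem Setoid.exists_equiv_quotient_prod_fin {α : Type*} [Finite α] (r : Setoid α) {n : ℕ}
    (h : ∀ a, Nat.card {b // r b a} = n) :
    ∃ e : α ≃ Quotient r × Fin n, ∀ a, (e a).1 = Quotient.mk r a := by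
  have hfiber (q : Quotient r) : {a // Quotient.mk r a = q} ≃ Fin n := by
    refine Finite.equivFinOfCardEq ?_
    induction q using Quotient.inductionOn with
    | h a => exact (Nat.card_congr (Equiv.subtypeEquivRight fun b => Quotient.eq)).trans (h a)
  exact ⟨(Equiv.sigmaFiberEquiv (Quotient.mk r)).symm.trans
    ((Equiv.sigmaCongrRight hfiber).trans (Equiv.sigmaEquivProd _ _)), fun _ => rfl⟩

/-- `(i, j) ↦ 2 i + j`, so that the first coordinate indexes the matched pairs of `cpm k`. -/
def cpmEquiv (k : ℕ) : Fin k × Fin 2 ≃ Fin (2 * k) :=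
  finProdFinEquiv.trans (finCongr (mul_comm k 2))

lemma cpm_adj_cpmEquiv {k : ℕ} {p q : Fin k × Fin 2} :
    (cpm k).Adj (cpmEquiv k p) (cpmEquiv k q) ↔ p.1 ≠ q.1 := by
  have hdiv (p : Fin k × Fin 2) : (cpmEquiv k p : ℕ) / 2 = p.1 := by
    simp only [cpmEquiv, Equiv.trans_apply, finCongr_apply, Fin.val_cast, finProdFinEquiv_apply_val]
    omega
  simp only [cpm, hdiv, ne_eq, Fin.val_inj]

namespace SimpleGraph

variable {V : Type*} {G : SimpleGraph V}

theorem Connected.exists_adj_of_mem_of_notMem (hconn : G.Connected) {S : Set V} {u v : V}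
    (hu : u ∈ S) (hv : v ∉ S) : ∃ x ∈ S, ∃ y ∉ S, G.Adj x y := by
  obtain ⟨p⟩ := hconn.preconnected u v
  obtain ⟨d, -, hd₁, hd₂⟩ := p.exists_boundary_dart S hu hv
  exact ⟨d.fst, hd₁, d.snd, hd₂, d.adj⟩

lemma connected_induce_singleton (v : V) : (G.induce (({v} : Finset V) : Set V)).Connected := by
  rw [coe_singleton, induce_singleton_eq_top]
  exact connected_top

lemma connected_induce_insert [DecidableEq V] {A : Finset V} {u v : V}
    (hA : (G.induce (A : Set V)).Connected) (hv : v ∈ A) (huv : G.Adj u v) :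
    (G.induce ((insert u A : Finset V) : Set V)).Connected := by
  rw [coe_insert, Set.insert_eq]
  exact connected_induce_union (by simp) hA.preconnected rfl hv huv

variable [Fintype V] [DecidableRel G.Adj]

lemma IsRegularOfDegree.eq_of_adj_of_adj (h : G.IsRegularOfDegree 1) {a b c : V}
    (hab : G.Adj a b) (hac : G.Adj a c) : b = c :=
  Finset.card_le_one.mp (h a).le b (by simpa using hab) c (by simpa using hac)

variable [DecidableEq V]

theorem IsRegularOfDegree.card_le_two (hconn : G.Connected) (h : G.IsRegularOfDegree 1) :
    Fintype.card V ≤ 2 := by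
  obtain ⟨u⟩ := hconn.nonempty
  obtain ⟨c, huc⟩ : ∃ c, G.Adj u c := (G.degree_pos_iff_exists_adj u).mp (by simp [h u])
  have hall (w : V) : w ∈ ({u, c} : Finset V) := by
    by_contra hw
    obtain ⟨x, hx, y, hy, hxy⟩ := hconn.exists_adj_of_mem_of_notMem (S := {u, c}) (u := u)
      (v := w) (by simp) (by simpa using hw)
    rcases hx with rfl | rfl
    · exact hy (Or.inr (h.eq_of_adj_of_adj hxy huc))
    · exact hy (Or.inl (h.eq_of_adj_of_adj hxy huc.symm))
  calc Fintype.card V = #(univ : Finset V) := card_univ.symm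
    _ ≤ #{u, c} := card_le_card fun w _ => hall w
    _ ≤ 2 := Finset.card_le_two

theorem IsRegularOfDegree.exists_iso_cpm (h : Gᶜ.IsRegularOfDegree 1) :
    ∃ k, Fintype.card V = 2 * k ∧ Nonempty (G ≃g cpm k) := by
  -- non-adjacency is an equivalence relation whose classes are the edges of `Gᶜ`
  let r : Setoid V :=
    { r a b := ¬G.Adj a b
      iseqv :=
        { refl := fun _ => G.irrefl
          symm := fun hab hba => hab hba.symm
          trans := fun {a b c} hab hbc => by
            obtain rfl | hab' := eq_or_ne a b
            · exact hbc
            obtain rfl | hbc' := eq_or_ne b c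
            · exact hab
            obtain rfl := h.eq_of_adj_of_adj (a := b) ⟨hab'.symm, fun h => hab h.symm⟩
              ⟨hbc', hbc⟩
            exact G.irrefl } }
  have hclass (a : V) : Nat.card {b // r b a} = 2 := by
    have hnonadj : ({b | ¬G.Adj b a} : Finset V) = insert a (Gᶜ.neighborFinset a) := by
      ext b
      simp only [mem_filter, mem_univ, true_and, mem_insert, mem_neighborFinset, compl_adj]
      grind [G.ne_of_adj, G.adj_symm]
    change Nat.card {b // ¬G.Adj b a} = 2
    rw [Nat.card_eq_fintype_card, Fintype.card_subtype, hnonadj,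
      card_insert_of_notMem (Gᶜ.notMem_neighborFinset_self a), card_neighborFinset_eq_degree, h a]
  obtain ⟨e, he⟩ := r.exists_equiv_quotient_prod_fin hclass
  let k := Nat.card (Quotient r)
  have hcard : Fintype.card V = 2 * k := by
    rw [← Nat.card_eq_fintype_card, Nat.card_congr e]
    simp [k, mul_comm]
  refine ⟨k, hcard, ⟨⟨e.trans (((Finite.equivFin _).prodCongr (Equiv.refl _)).trans
    (cpmEquiv k)), ?_⟩⟩⟩
  intro a b
  simp [cpm_adj_cpmEquiv, he, Quotient.eq, r]

variable (G) in
def outerBoundary (A : Finset V) : Finset V := A.biUnion (fun x => G.neighborFinset x) \ A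

@[simp]
lemma mem_outerBoundary {A : Finset V} {y : V} :
    y ∈ G.outerBoundary A ↔ (∃ x ∈ A, G.Adj x y) ∧ y ∉ A := by
  simp [outerBoundary]

lemma hasMinor_completeBipartiteGraph_of_card_le_card_outerBoundary {κ ι : Type*}
    [Subsingleton κ] [Fintype ι] {A : Finset V} (hA : (G.induce (A : Set V)).Connected)
    (hcard : Fintype.card ι ≤ #(G.outerBoundary A)) :
    G.HasMinor (completeBipartiteGraph κ ι) := by
  obtain ⟨f⟩ := Function.Embedding.nonempty_of_card_le (α := ι) (β := G.outerBoundary A)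
    (by rwa [Fintype.card_coe])
  have hf (i : ι) := mem_outerBoundary.mp (f i).2
  refine ⟨Sum.elim (fun _ => (A : Set V)) (fun i => {(f i : V)}), ?_, ?_, ?_, ?_⟩
  · rintro (_ | i)
    · exact Set.nonempty_coe_sort.mp hA.nonempty
    · exact Set.singleton_nonempty _
  · rintro (_ | i)
    · exact hA
    · simp only [Sum.elim_inr, induce_singleton_eq_top]
      exact connected_top
  · rintro (k | i) (l | j) hne
    · exact absurd (congrArg Sum.inl (Subsingleton.elim k l)) hne
    · simpa using (hf j).2
    · simpa using (hf i).2
    · exact Set.disjoint_singleton.mpr fun h =>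
        hne (congrArg Sum.inr (f.injective (Subtype.ext h)))
  · rintro (_ | i) (_ | j) hadj
    · simp at hadj
    · obtain ⟨x, hx, hxj⟩ := (hf j).1
      exact ⟨x, hx, f j, rfl, hxj⟩
    · obtain ⟨x, hx, hxi⟩ := (hf i).1
      exact ⟨f i, rfl, x, hx, hxi.symm⟩
    · simp at hadj

section BoundedOuterBoundary

variable {d : ℕ} {u c w x y : V}

lemma card_filter_adj_le_one (hreg : G.IsRegularOfDegree d)
    (hbound : ∀ A : Finset V, (G.induce (A : Set V)).Connected → #(G.outerBoundary A) ≤ d)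
    (hux : G.Adj u x) : #{w ∈ (insert u (G.neighborFinset u))ᶜ | G.Adj w x} ≤ 1 := by
  have hA : (G.induce (({u, x} : Finset V) : Set V)).Connected :=
    connected_induce_insert (connected_induce_singleton x) (mem_singleton_self x) hux
  have hsub₁ : (G.neighborFinset u).erase x ⊆ G.outerBoundary {u, x} := by
    intro z hz
    simp only [mem_erase, mem_insert, mem_singleton, mem_neighborFinset,
      mem_outerBoundary] at hz ⊢
    grind [G.ne_of_adj, G.adj_symm]
  have hsub₂ :
      {w ∈ (insert u (G.neighborFinset u))ᶜ | G.Adj w x} ⊆ G.outerBoundary {u, x} := by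
    intro z hz
    simp only [mem_filter, mem_compl, mem_insert, mem_singleton, mem_neighborFinset,
      mem_outerBoundary] at hz ⊢
    grind [G.ne_of_adj, G.adj_symm]
  have hdisj : Disjoint ((G.neighborFinset u).erase x)
      {w ∈ (insert u (G.neighborFinset u))ᶜ | G.Adj w x} := by
    refine Finset.disjoint_left.mpr fun z hz => ?_
    simp only [mem_erase, mem_filter, mem_compl, mem_insert, mem_neighborFinset] at hz ⊢
    grind [G.ne_of_adj, G.adj_symm]
  have hcard := card_le_card (union_subset hsub₁ hsub₂)
  rw [card_union_of_disjoint hdisj, card_erase_of_mem (by simpa using hux),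
    card_neighborFinset_eq_degree, hreg u] at hcard
  have := hbound _ hA
  have : 1 ≤ d := hreg u ▸ (G.degree_pos_iff_exists_adj u).mpr ⟨x, hux⟩
  omega

lemma sub_one_le_card_filter_adj (hreg : G.IsRegularOfDegree d)
    (hbound : ∀ A : Finset V, (G.induce (A : Set V)).Connected → #(G.outerBoundary A) ≤ d)
    (huc : G.Adj u c) (hcw : G.Adj c w) (huw : ¬G.Adj u w) :
    d - 1 ≤ #{z ∈ G.neighborFinset u | G.Adj w z} := by
  have hA : (G.induce (({u, c, w} : Finset V) : Set V)).Connected :=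
    connected_induce_insert (connected_induce_insert (connected_induce_singleton w)
      (mem_singleton_self w) hcw) (mem_insert_self c _) huc
  have hsub :
      (G.neighborFinset u ∪ G.neighborFinset w).erase c ⊆ G.outerBoundary {u, c, w} := by
    intro z hz
    simp only [mem_erase, mem_union, mem_insert, mem_singleton, mem_neighborFinset,
      mem_outerBoundary] at hz ⊢
    grind [G.ne_of_adj, G.adj_symm]
  have hinter :
      {z ∈ G.neighborFinset u | G.Adj w z} = G.neighborFinset u ∩ G.neighborFinset w := by
    ext z
    simp
  have hunion := card_union_add_card_inter (G.neighborFinset u) (G.neighborFinset w)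
  have hc : c ∈ G.neighborFinset u ∪ G.neighborFinset w := by simpa using Or.inl huc
  have hcard := card_le_card hsub
  rw [card_erase_of_mem hc] at hcard
  simp only [card_neighborFinset_eq_degree, hreg u, hreg w] at hunion
  have := hbound _ hA
  rw [hinter]
  omega

lemma le_two_of_adj_adj_adj (hreg : G.IsRegularOfDegree d)
    (hbound : ∀ A : Finset V, (G.induce (A : Set V)).Connected → #(G.outerBoundary A) ≤ d)
    (huc : G.Adj u c) (hcx : G.Adj c x) (hxy : G.Adj x y) (hux : ¬G.Adj u x) (huy : ¬G.Adj u y)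
    (hy : ∀ z, G.Adj u z → ¬G.Adj z y) : d ≤ 2 := by
  have hA : (G.induce (({u, c, x, y} : Finset V) : Set V)).Connected :=
    connected_induce_insert (connected_induce_insert (connected_induce_insert
      (connected_induce_singleton y) (mem_singleton_self y) hxy) (mem_insert_self x _) hcx)
      (mem_insert_self c _) huc
  have hsub₁ : (G.neighborFinset u).erase c ⊆ G.outerBoundary {u, c, x, y} := by
    intro z hz
    simp only [mem_erase, mem_insert, mem_singleton, mem_neighborFinset,
      mem_outerBoundary] at hz ⊢
    grind [G.ne_of_adj, G.adj_symm]
  have hsub₂ : (G.neighborFinset y).erase x ⊆ G.outerBoundary {u, c, x, y} := by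
    intro z hz
    simp only [mem_erase, mem_insert, mem_singleton, mem_neighborFinset,
      mem_outerBoundary] at hz ⊢
    grind [G.ne_of_adj, G.adj_symm]
  have hdisj : Disjoint ((G.neighborFinset u).erase c) ((G.neighborFinset y).erase x) := by
    refine Finset.disjoint_left.mpr fun z hz => ?_
    simp only [mem_erase, mem_neighborFinset] at hz ⊢
    grind [G.ne_of_adj, G.adj_symm]
  have hcard := card_le_card (union_subset hsub₁ hsub₂)
  rw [card_union_of_disjoint hdisj, card_erase_of_mem (by simpa using huc),
    card_erase_of_mem (by simpa using hxy.symm)] at hcard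
  simp only [card_neighborFinset_eq_degree, hreg u, hreg y] at hcard
  have := hbound _ hA
  omega

lemma exists_adj_adj_of_not_adj (hconn : G.Connected) (hreg : G.IsRegularOfDegree d)
    (hbound : ∀ A : Finset V, (G.induce (A : Set V)).Connected → #(G.outerBoundary A) ≤ d)
    (hd : 3 ≤ d) (hwu : w ≠ u) (huw : ¬G.Adj u w) : ∃ c, G.Adj u c ∧ G.Adj c w := by
  by_contra hw
  obtain ⟨x, hx, y, hy, hxy⟩ := hconn.exists_adj_of_mem_of_notMem
    (S := {v | v = u ∨ G.Adj u v ∨ ∃ c, G.Adj u c ∧ G.Adj c v}) (v := w) (Or.inl rfl)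
    (by simp [*])
  simp only [Set.mem_ofPred_eq, not_or, not_exists, not_and] at hx hy
  obtain ⟨-, huy, hy⟩ := hy
  rcases hx with rfl | hux | ⟨c, huc, hcx⟩
  · exact huy hxy
  · exact hy x hux hxy
  · by_cases hux : G.Adj u x
    · exact hy x hux hxy
    · have := le_two_of_adj_adj_adj hreg hbound huc hcx hxy hux huy hy
      omega

theorem card_le_add_two_of_card_outerBoundary_le (hconn : G.Connected)
    (hreg : G.IsRegularOfDegree d)
    (hbound : ∀ A : Finset V, (G.induce (A : Set V)).Connected → #(G.outerBoundary A) ≤ d)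
    (hd : 3 ≤ d) : Fintype.card V ≤ d + 2 := by
  obtain ⟨u⟩ := hconn.nonempty
  set M := (insert u (G.neighborFinset u))ᶜ
  have hM : #M * (d - 1) ≤ #(G.neighborFinset u) * 1 := by
    refine card_mul_le_card_mul G.Adj (fun w hw => ?_) (fun x hx => ?_)
    · simp only [M, mem_compl, mem_insert, mem_neighborFinset, not_or] at hw
      obtain ⟨c, huc, hcw⟩ := exists_adj_adj_of_not_adj hconn hreg hbound hd hw.1 hw.2
      exact sub_one_le_card_filter_adj hreg hbound huc hcw hw.2
    · exact card_filter_adj_le_one hreg hbound ((mem_neighborFinset _ _ _).mp hx)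
  have hcard : #M + (d + 1) = Fintype.card V := by
    rw [← card_compl_add_card (insert u (G.neighborFinset u)),
      card_insert_of_notMem (notMem_neighborFinset_self _ _), card_neighborFinset_eq_degree, hreg u]
  rw [card_neighborFinset_eq_degree, hreg u] at hM
  by_contra! h
  have := Nat.mul_le_mul_right (d - 1) (show 2 ≤ #M by omega)
  omega

end BoundedOuterBoundary

end SimpleGraph

/-- For `s ≥ 2`, `s ≠ 3`, a connected `(s-1)`-regular graph with no
`K_{1,s}` minor is `K_s`, or `s` is odd and it is the complement of a perfect matching
on `s + 1` vertices. -/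
theorem regular_K1s_minorFree {V : Type*} [Fintype V] [DecidableEq V]
    (G : SimpleGraph V) [DecidableRel G.Adj] (s : ℕ) (hs2 : 2 ≤ s) (hs3 : s ≠ 3)
    (hconn : G.Connected) (hreg : G.IsRegularOfDegree (s - 1))
    (hfree : ¬ G.HasMinor (completeBipartiteGraph (Fin 1) (Fin s))) :
    Nonempty (G ≃g (⊤ : SimpleGraph (Fin s))) ∨
      ∃ m : ℕ, s = 2 * m + 1 ∧ Nonempty (G ≃g cpm (m + 1)) := by
  have hbound (A : Finset V) (hA : (G.induce (A : Set V)).Connected) :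
      #(G.outerBoundary A) ≤ s - 1 := by
    by_contra! h
    exact hfree (G.hasMinor_completeBipartiteGraph_of_card_le_card_outerBoundary hA
      (by rw [Fintype.card_fin]; omega))
  obtain ⟨u⟩ := hconn.nonempty
  have hlower : s ≤ Fintype.card V := by
    have := G.degree_lt_card_verts u
    have := hreg u
    omega
  have hupper : Fintype.card V ≤ s + 1 := by
    obtain rfl | hs := eq_or_ne s 2
    · exact (hreg.card_le_two hconn).trans (by omega)
    · have := G.card_le_add_two_of_card_outerBoundary_le hconn hreg hbound (by omega)
      omega
  obtain hn | hn : Fintype.card V = s ∨ Fintype.card V = s + 1 := by omega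
  · left
    obtain rfl : G = ⊤ := SimpleGraph.eq_top_iff_forall_isUniversal.mpr fun v =>
      (G.degree_eq_card_sub_one v).mp (hn ▸ hreg v)
    exact ⟨SimpleGraph.Iso.completeGraph (Fintype.equivFinOfCardEq hn)⟩
  · right
    have hcompl : Gᶜ.IsRegularOfDegree 1 := by
      have := hreg.compl
      rwa [hn, show s + 1 - 1 - (s - 1) = 1 by omega] at this
    obtain ⟨_ | m, hk, hiso⟩ := hcompl.exists_iso_cpm
    · omega
    · exact ⟨m, by omega, hiso⟩
end

section
/- Let $G$ be a graph with a set $L$ of exactly $\gamma$ dominating vertices and suppose $G$ contains $H$ as a minor, where $|V(H)| \geq \gamma$ and the minimum degree of $H$ is at least 1. Then $G - L$ contains $H[S]$ as a minor for some set $S \subseteq V(H)$ of size $|V(H)| - \gamma$. -/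
/-!
Branch sets of a minor model are pairwise disjoint, so each vertex of `L` lies in at most one
of them and at most `|L| = γ` branch sets meet `L`. Keeping any `|V(H)| - γ` of the remaining
branch sets gives a model of the corresponding induced subgraph of `H` inside `G - L`.
-/

namespace SimpleGraph

variable {V W : Type*}

structure IsMinorModel (G : SimpleGraph V) (H : SimpleGraph W) (f : W → Set V) : Prop where
  nonempty (w : W) : (f w).Nonempty
  connected (w : W) : (G.induce (f w)).Connected
  pairwise_disjoint : Pairwise fun w₁ w₂ => Disjoint (f w₁) (f w₂)
  exists_adj ⦃w₁ w₂ : W⦄ : H.Adj w₁ w₂ → ∃ v₁ ∈ f w₁, ∃ v₂ ∈ f w₂, G.Adj v₁ v₂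

theorem HasMinor.exists_isMinorModel {G : SimpleGraph V} {H : SimpleGraph W}
    (h : G.HasMinor H) : ∃ f, G.IsMinorModel H f :=
  let ⟨f, hne, hconn, hdisj, hadj⟩ := h
  ⟨f, hne, hconn, hdisj, hadj⟩

theorem IsMinorModel.hasMinor {G : SimpleGraph V} {H : SimpleGraph W} {f : W → Set V}
    (hf : G.IsMinorModel H f) : G.HasMinor H :=
  ⟨f, hf.nonempty, hf.connected, hf.pairwise_disjoint, hf.exists_adj⟩

def induceInduceIso (G : SimpleGraph V) {s U : Set V} (hs : s ⊆ U) :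
    (G.induce U).induce (Subtype.val ⁻¹' s) ≃g G.induce s where
  toEquiv := Equiv.subtypeSubtypeEquivSubtype fun hx => hs hx
  map_rel_iff' := Iff.rfl

theorem IsMinorModel.induce {G : SimpleGraph V} {H : SimpleGraph W} {f : W → Set V}
    (hf : G.IsMinorModel H f) (U : Set V) (S : Set W) (hS : ∀ w ∈ S, f w ⊆ U) :
    (G.induce U).IsMinorModel (H.induce S) fun w => Subtype.val ⁻¹' f w := by
  refine ⟨fun w => ?_, fun w => ?_, fun w₁ w₂ hw => ?_, fun w₁ w₂ hw => ?_⟩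
  · obtain ⟨v, hv⟩ := hf.nonempty w
    exact ⟨⟨v, hS w w.2 hv⟩, hv⟩
  · exact (induceInduceIso G (hS w w.2)).connected_iff.mpr (hf.connected w)
  · exact (hf.pairwise_disjoint (Subtype.coe_injective.ne hw)).preimage _
  · obtain ⟨v₁, hv₁, v₂, hv₂, hG⟩ := hf.exists_adj hw
    exact ⟨⟨v₁, hS w₁ w₁.2 hv₁⟩, hv₁, ⟨v₂, hS w₂ w₂.2 hv₂⟩, hv₂, hG⟩

end SimpleGraph

open Finset in
theorem Finset.card_filter_not_disjoint_le {V W : Type*} [Fintype W] {f : W → Set V}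
    (hf : Pairwise fun w₁ w₂ => Disjoint (f w₁) (f w₂)) (L : Finset V)
    [DecidablePred fun w => ¬Disjoint (f w) L] :
    #{w | ¬Disjoint (f w) L} ≤ #L := by
  refine card_le_card_of_forall_subsingleton (fun w x => x ∈ f w) (fun w hw => ?_)
    fun x _ w₁ hw₁ w₂ hw₂ => ?_
  · obtain ⟨x, hxf, hxL⟩ := Set.not_disjoint_iff.mp (mem_filter.mp hw).2
    exact ⟨x, hxL, hxf⟩
  · by_contra hne
    exact (hf hne).ne_of_mem hw₁.2 hw₂.2 rfl

theorem induced_minor_of_hasMinor_general {V W : Type*} [Fintype W]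
    (G : SimpleGraph V) (H : SimpleGraph W)
    (L : Finset V) (γ : ℕ) (hL : L.card = γ) (hγW : γ ≤ Fintype.card W)
    (hminor : G.HasMinor H) :
    ∃ S : Finset W, S.card + γ = Fintype.card W ∧
      (G.induce {v : V | v ∉ L}).HasMinor (H.induce (S : Set W)) := by
  classical
  obtain ⟨f, hf⟩ := hminor.exists_isMinorModel
  set T : Finset W := {w | ¬Disjoint (f w) L}
  have hT : T.card ≤ γ := hL ▸ Finset.card_filter_not_disjoint_le hf.pairwise_disjoint L
  obtain ⟨S, hST, hS⟩ := Finset.exists_subset_card_eq (s := Tᶜ) (n := Fintype.card W - γ)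
    (by rw [Finset.card_compl]; omega)
  refine ⟨S, by omega, (hf.induce _ _ fun w hw => ?_).hasMinor⟩
  have hwT : Disjoint (f w) L := by simpa [T] using hST hw
  exact hwT.subset_compl_right

/-- If `G` has a set `L` of exactly `γ` dominating vertices,
`H` has minimum degree at least `1` and `|V(H)| ≥ γ`, and `G` contains `H` as a minor,
then `G - L` contains `H[S]` as a minor for some `S ⊆ V(H)` with `|S| = |V(H)| - γ`. -/
theorem induced_minor_of_hasMinor {V W : Type*} [Fintype V] [Fintype W] [DecidableEq V]
    [DecidableEq W] (G : SimpleGraph V) (H : SimpleGraph W) [DecidableRel H.Adj]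
    (L : Finset V) (γ : ℕ) (hL : L.card = γ) (hγW : γ ≤ Fintype.card W)
    (hdom : ∀ u ∈ L, ∀ v : V, v ≠ u → G.Adj u v)
    (hδ : ∀ w : W, 0 < H.degree w)
    (hminor : G.HasMinor H) :
    ∃ S : Finset W, S.card + γ = Fintype.card W ∧
      (G.induce {v : V | v ∉ L}).HasMinor (H.induce (S : Set W)) :=
  induced_minor_of_hasMinor_general G H L γ hL hγW hminor
end
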